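/- arXiv:0707.2257 — 4 statements merged into one kernel-verified Lean document; each statement's English description precedes it below -/
import Mathlib

section
/- For an S-path S = (S_0,...,S_m) with S_0 = 0, S_m = m, and S_j ≤ min(j, S_{j+1}) for j = 1,...,m-1, the number of partitions of {1,...,m} corresponding to S equals the product over all indices j with S_j > S_{j-1} of the binomial coefficient C(j - 1 - S_{j-1}, j - S_j). -/
/-!
Build a partition cell by cell, in increasing order of the cell maxima. When the cells with
maxima below an ascent `j` are in place, they use exactly `S (j - 1)` of the `j - 1` elements
below `j`, and the cell with maximum `j` is `j` together with any `S j - S (j - 1) - 1` of the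
remaining `j - 1 - S (j - 1)` of them; by symmetry of binomial coefficients there are
`C(j - 1 - S (j - 1), j - S j)` choices, independently of the earlier ones. The count is carried
out for partitions of an arbitrary finite `T ⊆ ℕ` with prescribed cell maxima `A` and sizes `c`.
-/

/-- An S-path of `m+1` coordinates: `S 0 = 0`, `S m = m`,
and `S j ≤ min j (S (j+1))` for `j = 1, …, m-1`. -/
def IsSPath (m : ℕ) (S : ℕ → ℕ) : Prop :=
  S 0 = 0 ∧ S m = m ∧ ∀ j, 1 ≤ j → j < m → S j ≤ min j (S (j + 1))

/-- `P` is a set partition of `{1, …, m}`, given as the finset of its (nonempty) cells. -/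
def IsPartitionOf (m : ℕ) (P : Finset (Finset ℕ)) : Prop :=
  (∀ C ∈ P, C.Nonempty ∧ C ⊆ Finset.Icc 1 m) ∧
  (∀ i ∈ Finset.Icc 1 m, ∃! C, C ∈ P ∧ i ∈ C)

/-- The partition `P` of `{1, …, m}` corresponds to the S-path `S`: cell maxima are exactly
the ascent locations of `S`, and the cell with maximum `j` has `S j - S (j-1)` elements. -/
def CorrespondsTo (m : ℕ) (S : ℕ → ℕ) (P : Finset (Finset ℕ)) : Prop :=
  IsPartitionOf m P ∧
  (∀ C ∈ P, ∃ j : ℕ, C.max = (j : WithBot ℕ) ∧ S (j - 1) < S j ∧ C.card = S j - S (j - 1)) ∧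
  (∀ j ∈ Finset.Icc 1 m, S (j - 1) < S j → ∃ C ∈ P, C.max = (j : WithBot ℕ))

open Finset

structure IsPartitionWithMaxima (c : ℕ → ℕ) (T A : Finset ℕ) (P : Finset (Finset ℕ)) : Prop where
  nonempty : ∀ C ∈ P, C.Nonempty
  subset : ∀ C ∈ P, C ⊆ T
  existsUnique : ∀ i ∈ T, ∃! C, C ∈ P ∧ i ∈ C
  exists_max : ∀ C ∈ P, ∃ j ∈ A, C.max = j ∧ #C = c j
  exists_cell : ∀ j ∈ A, ∃ C ∈ P, C.max = j

namespace IsPartitionWithMaxima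

variable {c : ℕ → ℕ} {T A D : Finset ℕ} {P : Finset (Finset ℕ)} {a : ℕ}

theorem eq_of_mem_of_mem (h : IsPartitionWithMaxima c T A P) {C₁ C₂ : Finset ℕ} {i : ℕ}
    (h₁ : C₁ ∈ P) (h₂ : C₂ ∈ P) (hi₁ : i ∈ C₁) (hi₂ : i ∈ C₂) : C₁ = C₂ :=
  (h.existsUnique i (h.subset C₁ h₁ hi₁)).unique ⟨h₁, hi₁⟩ ⟨h₂, hi₂⟩

theorem notMem_of_nonempty (h : IsPartitionWithMaxima c (T \ D) A P) (hD : D.Nonempty) :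
    D ∉ P := by
  obtain ⟨x, hx⟩ := hD
  exact fun hDP => (mem_sdiff.1 (h.subset D hDP hx)).2 hx

theorem erase (h : IsPartitionWithMaxima c T A P) (hD : D ∈ P) (hDa : D.max = a) :
    IsPartitionWithMaxima c (T \ D) (A.erase a) (P.erase D) where
  nonempty C hC := h.nonempty C (mem_of_mem_erase hC)
  subset C hC x hx := mem_sdiff.2 ⟨h.subset C (mem_of_mem_erase hC) hx, fun hxD =>
    ne_of_mem_erase hC (h.eq_of_mem_of_mem (mem_of_mem_erase hC) hD hx hxD)⟩
  existsUnique i hi := by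
    obtain ⟨hiT, hiD⟩ := mem_sdiff.1 hi
    obtain ⟨C, ⟨hC, hiC⟩, huniq⟩ := h.existsUnique i hiT
    refine ⟨C, ⟨mem_erase.2 ⟨?_, hC⟩, hiC⟩,
      fun C' hC' => huniq C' ⟨mem_of_mem_erase hC'.1, hC'.2⟩⟩
    rintro rfl
    exact hiD hiC
  exists_max C hC := by
    obtain ⟨j, hj, hCj, hcard⟩ := h.exists_max C (mem_of_mem_erase hC)
    refine ⟨j, mem_erase.2 ⟨?_, hj⟩, hCj, hcard⟩
    rintro rfl
    exact ne_of_mem_erase hC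
      (h.eq_of_mem_of_mem (mem_of_mem_erase hC) hD (mem_of_max hCj) (mem_of_max hDa))
  exists_cell j hj := by
    obtain ⟨C, hC, hCj⟩ := h.exists_cell j (mem_of_mem_erase hj)
    refine ⟨C, mem_erase.2 ⟨?_, hC⟩, hCj⟩
    rintro rfl
    exact ne_of_mem_erase hj (WithBot.coe_injective (hCj.symm.trans hDa))

theorem insert (h : IsPartitionWithMaxima c (T \ D) (A.erase a) P) (hDT : D ⊆ T)
    (hDa : D.max = a) (hcard : #D = c a) (ha : a ∈ A) :
    IsPartitionWithMaxima c T A (insert D P) where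
  nonempty C hC := by
    rcases mem_insert.1 hC with rfl | hC
    · exact ⟨a, mem_of_max hDa⟩
    · exact h.nonempty C hC
  subset C hC := by
    rcases mem_insert.1 hC with rfl | hC
    · exact hDT
    · exact (h.subset C hC).trans sdiff_subset
  existsUnique i hi := by
    by_cases hiD : i ∈ D
    · refine ⟨D, ⟨mem_insert_self D P, hiD⟩, fun C ⟨hC, hiC⟩ => ?_⟩
      rcases mem_insert.1 hC with rfl | hC
      · rfl
      · exact absurd hiD (mem_sdiff.1 (h.subset C hC hiC)).2
    · obtain ⟨C, ⟨hC, hiC⟩, huniq⟩ := h.existsUnique i (mem_sdiff.2 ⟨hi, hiD⟩)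
      refine ⟨C, ⟨mem_insert_of_mem hC, hiC⟩, fun C' ⟨hC', hiC'⟩ => ?_⟩
      rcases mem_insert.1 hC' with rfl | hC'
      · exact absurd hiC' hiD
      · exact huniq C' ⟨hC', hiC'⟩
  exists_max C hC := by
    rcases mem_insert.1 hC with rfl | hC
    · exact ⟨a, ha, hDa, hcard⟩
    · obtain ⟨j, hj, hCj, hc⟩ := h.exists_max C hC
      exact ⟨j, mem_of_mem_erase hj, hCj, hc⟩
  exists_cell j hj := by
    by_cases hja : j = a
    · exact ⟨D, mem_insert_self D P, hja ▸ hDa⟩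
    · obtain ⟨C, hC, hCj⟩ := h.exists_cell j (mem_erase.2 ⟨hja, hj⟩)
      exact ⟨C, mem_insert_of_mem hC, hCj⟩

end IsPartitionWithMaxima

open Classical in
noncomputable def partitionsWithMaxima (c : ℕ → ℕ) (T A : Finset ℕ) : Finset (Finset (Finset ℕ)) :=
  {P ∈ T.powerset.powerset | IsPartitionWithMaxima c T A P}

section Counting

variable {c : ℕ → ℕ} {T A : Finset ℕ} {P : Finset (Finset ℕ)} {a : ℕ}

theorem mem_partitionsWithMaxima :
    P ∈ partitionsWithMaxima c T A ↔ IsPartitionWithMaxima c T A P := by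
  simp only [partitionsWithMaxima, mem_filter, mem_powerset, and_iff_right_iff_imp]
  exact fun h C hC => mem_powerset.2 (h.subset C hC)

theorem partitionsWithMaxima_empty : partitionsWithMaxima c ∅ ∅ = {∅} := by
  ext P
  rw [mem_partitionsWithMaxima, mem_singleton]
  constructor
  · intro h
    refine eq_empty_iff_forall_notMem.2 fun C hC => ?_
    obtain ⟨x, hx⟩ := h.nonempty C hC
    exact notMem_empty x (h.subset C hC hx)
  · rintro rfl
    exact ⟨by simp, by simp, by simp, by simp, by simp⟩

theorem card_filter_max_eq (ha : a ∈ T) (k : ℕ) :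
    #{D ∈ T.powerset | D.max = (a : WithBot ℕ) ∧ #D = k + 1} = (#{t ∈ T | t < a}).choose k := by
  rw [← card_powersetCard]
  refine card_bij' (fun D _ => D.erase a) (fun Y _ => insert a Y) ?_ ?_ ?_ ?_
  · intro D hD
    obtain ⟨hDT, hDa, hcard⟩ := mem_filter.1 hD
    refine mem_powersetCard.2 ⟨fun x hx => mem_filter.2 ⟨mem_powerset.1 hDT (mem_of_mem_erase hx),
      (le_max_of_eq (mem_of_mem_erase hx) hDa).lt_of_ne (ne_of_mem_erase hx)⟩, ?_⟩
    have haD : a ∈ D := mem_of_max hDa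
    rw [card_erase_of_mem haD, hcard, add_tsub_cancel_right]
  · intro Y hY
    obtain ⟨hYT, hcard⟩ := mem_powersetCard.1 hY
    have hYa : ∀ y ∈ Y, y < a := fun y hy => (mem_filter.1 (hYT hy)).2
    have haY : a ∉ Y := fun h => (hYa a h).false
    refine mem_filter.2 ⟨mem_powerset.2 (insert_subset ha fun y hy => (mem_filter.1 (hYT hy)).1),
      ?_, by rw [card_insert_of_notMem haY, hcard]⟩
    refine le_antisymm (Finset.max_le fun y hy => ?_) (le_max (mem_insert_self a Y))
    rcases mem_insert.1 hy with rfl | hy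
    · exact le_rfl
    · exact WithBot.coe_le_coe.2 (hYa y hy).le
  · intro D hD
    exact insert_erase (mem_of_max (mem_filter.1 hD).2.1)
  · intro Y hY
    exact erase_insert fun h => (mem_filter.1 ((mem_powersetCard.1 hY).1 h)).2.false

theorem partitionsWithMaxima_eq_biUnion (ha : a ∈ A) :
    partitionsWithMaxima c T A = {D ∈ T.powerset | D.max = (a : WithBot ℕ) ∧ #D = c a}.biUnion
      fun D => (partitionsWithMaxima c (T \ D) (A.erase a)).image (insert D) := by
  ext P
  simp only [mem_biUnion, mem_image, mem_filter, mem_powerset, mem_partitionsWithMaxima]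
  constructor
  · intro h
    obtain ⟨D, hD, hDa⟩ := h.exists_cell a ha
    obtain ⟨j, -, hDj, hcard⟩ := h.exists_max D hD
    obtain rfl : j = a := WithBot.coe_injective (hDj.symm.trans hDa)
    exact ⟨D, ⟨h.subset D hD, hDa, hcard⟩, P.erase D, h.erase hD hDa, insert_erase hD⟩
  · rintro ⟨D, ⟨hDT, hDa, hcard⟩, P', hP', rfl⟩
    exact hP'.insert hDT hDa hcard ha

theorem card_partitionsWithMaxima_eq_sum (ha : a ∈ A) :
    #(partitionsWithMaxima c T A) = ∑ D ∈ {D ∈ T.powerset | D.max = (a : WithBot ℕ) ∧ #D = c a},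
      #(partitionsWithMaxima c (T \ D) (A.erase a)) := by
  rw [partitionsWithMaxima_eq_biUnion ha, card_biUnion]
  · refine sum_congr rfl fun D hD => card_image_of_injOn fun P₁ h₁ P₂ h₂ heq => ?_
    have hD : D.Nonempty := ⟨a, mem_of_max (mem_filter.1 hD).2.1⟩
    have hD₁ := (mem_partitionsWithMaxima.1 h₁).notMem_of_nonempty hD
    have hD₂ := (mem_partitionsWithMaxima.1 h₂).notMem_of_nonempty hD
    rw [← erase_insert hD₁, ← erase_insert hD₂]
    exact congrArg (·.erase D) heq
  · intro D₁ hD₁ D₂ hD₂ hne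
    simp only [coe_filter, mem_powerset, Set.mem_ofPred_eq] at hD₁ hD₂
    refine disjoint_left.2 fun P hP₁ hP₂ => hne ?_
    obtain ⟨P₁, h₁, rfl⟩ := mem_image.1 hP₁
    obtain ⟨P₂, -, hP⟩ := mem_image.1 hP₂
    have hP₁ := (mem_partitionsWithMaxima.1 h₁).insert hD₁.1 hD₁.2.1 hD₁.2.2 ha
    exact hP₁.eq_of_mem_of_mem (mem_insert_self D₁ P₁) (hP ▸ mem_insert_self D₂ P₂)
      (mem_of_max hD₁.2.1) (mem_of_max hD₂.2.1)

/-- The number of elements of `T` below `j` not used by the cells with maxima in `A` below `j`. -/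
def numFreeBelow (c : ℕ → ℕ) (T A : Finset ℕ) (j : ℕ) : ℕ :=
  #{t ∈ T | t < j} - ∑ i ∈ A with i < j, c i

theorem numFreeBelow_sdiff {D : Finset ℕ} {j : ℕ} (hDT : D ⊆ T) (hDa : D.max = a)
    (hcard : #D = c a) (haA : a ∉ A) (haj : a < j) :
    numFreeBelow c (T \ D) A j = numFreeBelow c T (insert a A) j := by
  have hD : D ⊆ {t ∈ T | t < j} := fun x hx =>
    mem_filter.2 ⟨hDT hx, (le_max_of_eq hx hDa).trans_lt haj⟩
  have hsdiff : {t ∈ T \ D | t < j} = {t ∈ T | t < j} \ D := by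
    ext x
    simp only [mem_filter, mem_sdiff]
    tauto
  rw [numFreeBelow, numFreeBelow, filter_insert, if_pos haj,
    sum_insert fun h => haA (mem_filter.1 h).1, hsdiff, card_sdiff_of_subset hD, hcard,
    Nat.sub_sub]

theorem card_partitionsWithMaxima (hAT : A ⊆ T) (hc : ∀ j ∈ A, 0 < c j)
    (hsum : ∑ j ∈ A, c j = #T) :
    #(partitionsWithMaxima c T A) = ∏ j ∈ A, (numFreeBelow c T A j).choose (c j - 1) := by
  induction A using Finset.induction_on_min generalizing T with
  | empty =>
    obtain rfl : T = ∅ := card_eq_zero.1 (by simpa using hsum.symm)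
    simp [partitionsWithMaxima_empty]
  | insert a A haA ih =>
    have haA' : a ∉ A := fun h => (haA a h).false
    have hfree : ∀ D ∈ {D ∈ T.powerset | D.max = (a : WithBot ℕ) ∧ #D = c a},
        #(partitionsWithMaxima c (T \ D) A) =
          ∏ j ∈ A, (numFreeBelow c T (insert a A) j).choose (c j - 1) := by
      intro D hD
      simp only [mem_filter, mem_powerset] at hD
      obtain ⟨hDT, hDa, hcard⟩ := hD
      have hAD : A ⊆ T \ D := fun x hx => mem_sdiff.2 ⟨hAT (mem_insert_of_mem hx),
        fun hxD => (le_max_of_eq hxD hDa).not_gt (haA x hx)⟩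
      rw [ih hAD (fun j hj => hc j (mem_insert_of_mem hj)) (by
        rw [card_sdiff_of_subset hDT, hcard, ← hsum, sum_insert haA', add_tsub_cancel_left])]
      exact prod_congr rfl fun j hj => by rw [numFreeBelow_sdiff hDT hDa hcard haA' (haA j hj)]
    have hbelow : numFreeBelow c T (insert a A) a = #{t ∈ T | t < a} := by
      have hnone : {i ∈ insert a A | i < a} = ∅ := filter_eq_empty_iff.2 fun x hx => by
        rcases mem_insert.1 hx with rfl | hx
        · exact lt_irrefl x
        · exact (haA x hx).not_gt
      rw [numFreeBelow, hnone, sum_empty, tsub_zero]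
    obtain ⟨k, hk⟩ := Nat.exists_eq_add_one.2 (hc a (mem_insert_self a A))
    rw [card_partitionsWithMaxima_eq_sum (mem_insert_self a A), erase_insert haA',
      sum_congr rfl hfree, sum_const, smul_eq_mul, prod_insert haA', hbelow, hk,
      card_filter_max_eq (hAT (mem_insert_self a A)), add_tsub_cancel_right]

end Counting

namespace IsSPath

variable {m : ℕ} {S : ℕ → ℕ}

theorem pred_le (hS : IsSPath m S) {j : ℕ} (hj : j ≤ m) : S (j - 1) ≤ S j := by
  obtain ⟨h0, -, hstep⟩ := hS
  rcases Nat.lt_or_ge j 2 with hj2 | hj2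
  · interval_cases j <;> simp [h0]
  · have := hstep (j - 1) (by omega) (by omega)
    rw [Nat.sub_add_cancel (by omega)] at this
    exact this.trans (min_le_right _ _)

theorem le_self (hS : IsSPath m S) {j : ℕ} (hj : j ≤ m) : S j ≤ j := by
  obtain ⟨h0, hm, hstep⟩ := hS
  rcases Nat.eq_zero_or_pos j with rfl | hpos
  · exact h0.le
  rcases hj.lt_or_eq with hjm | rfl
  · exact (hstep j hpos hjm).trans (min_le_left _ _)
  · exact hm.le

theorem sum_Icc_sub_pred (hS : IsSPath m S) {k : ℕ} (hk : k ≤ m) :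
    ∑ j ∈ Icc 1 k, (S j - S (j - 1)) = S k := by
  induction k with
  | zero => simpa using hS.1.symm
  | succ k ih =>
    rw [sum_Icc_succ_top (by omega), ih (by omega), Nat.add_sub_cancel]
    have := hS.pred_le hk
    rw [Nat.add_sub_cancel] at this
    omega

theorem sum_ascents_sub_pred (hS : IsSPath m S) {k : ℕ} (hk : k ≤ m) :
    ∑ j ∈ Icc 1 k with S (j - 1) < S j, (S j - S (j - 1)) = S k := by
  rw [sum_filter_of_ne fun j _ h => by omega, hS.sum_Icc_sub_pred hk]

theorem numFreeBelow_ascents (hS : IsSPath m S) {j : ℕ} (hj : j ∈ Icc 1 m) :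
    numFreeBelow (fun i => S i - S (i - 1)) (Icc 1 m) {i ∈ Icc 1 m | S (i - 1) < S i} j =
      j - 1 - S (j - 1) := by
  obtain ⟨hj1, hjm⟩ := mem_Icc.1 hj
  have hbelow : {t ∈ Icc 1 m | t < j} = Icc 1 (j - 1) := by
    ext t
    simp only [mem_filter, mem_Icc]
    omega
  have hascents : {i ∈ {i ∈ Icc 1 m | S (i - 1) < S i} | i < j} =
      {i ∈ Icc 1 (j - 1) | S (i - 1) < S i} := by
    ext i
    simp only [mem_filter, mem_Icc]
    omega
  rw [numFreeBelow, hbelow, hascents, hS.sum_ascents_sub_pred (by omega), Nat.card_Icc,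
    Nat.add_sub_cancel]

end IsSPath

theorem correspondsTo_iff {m : ℕ} {S : ℕ → ℕ} {P : Finset (Finset ℕ)} :
    CorrespondsTo m S P ↔ IsPartitionWithMaxima (fun j => S j - S (j - 1)) (Icc 1 m)
      {j ∈ Icc 1 m | S (j - 1) < S j} P := by
  constructor
  · rintro ⟨⟨hcells, hunique⟩, hmax, hascent⟩
    refine ⟨fun C hC => (hcells C hC).1, fun C hC => (hcells C hC).2, hunique,
      fun C hC => ?_, fun j hj => hascent j (mem_filter.1 hj).1 (mem_filter.1 hj).2⟩
    obtain ⟨j, hCj, hj, hcard⟩ := hmax C hC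
    exact ⟨j, mem_filter.2 ⟨(hcells C hC).2 (mem_of_max hCj), hj⟩, hCj, hcard⟩
  · intro h
    refine ⟨⟨fun C hC => ⟨h.nonempty C hC, h.subset C hC⟩, h.existsUnique⟩, fun C hC => ?_,
      fun j hj hascent => h.exists_cell j (mem_filter.2 ⟨hj, hascent⟩)⟩
    obtain ⟨j, hj, hCj, hcard⟩ := h.exists_max C hC
    exact ⟨j, hCj, (mem_filter.1 hj).2, hcard⟩

/-- The number of partitions of `{1,…,m}` corresponding to an S-path `S` equals
`∏_{j : S_j > S_{j-1}} C(j - 1 - S_{j-1}, j - S_j)`. -/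
theorem card_correspondsTo_eq_prod_choose (m : ℕ) (S : ℕ → ℕ) (hS : IsSPath m S) :
    {P : Finset (Finset ℕ) | CorrespondsTo m S P}.ncard =
      ∏ j ∈ (Finset.Icc 1 m).filter (fun j => S (j - 1) < S j),
        Nat.choose (j - 1 - S (j - 1)) (j - S j) := by
  have hset : {P : Finset (Finset ℕ) | CorrespondsTo m S P} =
      partitionsWithMaxima (fun j => S j - S (j - 1)) (Icc 1 m)
        {j ∈ Icc 1 m | S (j - 1) < S j} := by
    ext P
    rw [Set.mem_ofPred_eq, mem_coe, mem_partitionsWithMaxima, correspondsTo_iff]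
  have hsum : ∑ j ∈ Icc 1 m with S (j - 1) < S j, (S j - S (j - 1)) = #(Icc 1 m) := by
    rw [hS.sum_ascents_sub_pred le_rfl, hS.2.1, Nat.card_Icc, Nat.add_sub_cancel]
  rw [hset, Set.ncard_coe_finset, card_partitionsWithMaxima (filter_subset _ _)
    (fun j hj => Nat.sub_pos_of_lt (mem_filter.1 hj).2) hsum]
  refine prod_congr rfl fun j hj => ?_
  have hSj := hS.le_self (mem_Icc.1 (mem_filter.1 hj).1).2
  have hascent := (mem_filter.1 hj).2
  rw [hS.numFreeBelow_ascents (mem_filter.1 hj).1]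
  exact Nat.choose_symm_of_eq_add (by omega)
end

section
/- Every S-path of m+1 coordinates corresponds to at least one partition of {1,...,m}; that is, the set C_S of partitions corresponding to an S-path S is nonempty. -/
namespace SPathAux

/-- number of "rises" in `[1,j]`. -/
def rc (S : ℕ → ℕ) (j : ℕ) : ℕ :=
  ((Finset.Icc 1 j).filter (fun i => S (i-1) < S i)).card

/-- The max of the cell containing `e`. -/
noncomputable def M (m : ℕ) (S : ℕ → ℕ) (e : ℕ) : ℕ :=
  if S (e-1) < S e then e
  else sInf {j | S (j-1) < S j ∧ j ≤ m ∧ e + rc S j ≤ S j + rc S e}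

noncomputable def cell (m : ℕ) (S : ℕ → ℕ) (j : ℕ) : Finset ℕ :=
  (Finset.Icc 1 m).filter (fun e => M m S e = j)

noncomputable def part (m : ℕ) (S : ℕ → ℕ) : Finset (Finset ℕ) :=
  ((Finset.Icc 1 m).filter (fun j => S (j-1) < S j)).image (cell m S)

variable {m : ℕ} {S : ℕ → ℕ}

lemma step (hS : IsSPath m S) {j : ℕ} (hj : j < m) : S j ≤ S (j+1) := by
  rcases Nat.eq_zero_or_pos j with h | h
  · subst h; rw [hS.1]; exact Nat.zero_le _
  · exact le_trans (hS.2.2 j h hj) (min_le_right _ _)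

lemma mono (hS : IsSPath m S) {a b : ℕ} (hab : a ≤ b) (hb : b ≤ m) : S a ≤ S b := by
  induction b with
  | zero => have : a = 0 := by omega
            rw [this]
  | succ n ih =>
    rcases Nat.lt_or_ge a (n+1) with h | h
    · exact le_trans (ih (by omega) (by omega)) (step hS (by omega))
    · have : a = n + 1 := by omega
      rw [this]

lemma S_le (hS : IsSPath m S) {j : ℕ} (hj : j ≤ m) : S j ≤ j := by
  rcases Nat.eq_zero_or_pos j with h | h
  · subst h; rw [hS.1]
  · rcases Nat.lt_or_ge j m with h2 | h2
    · exact le_trans (hS.2.2 j h h2) (min_le_left _ _)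
    · have : j = m := by omega
      subst this; exact le_of_eq hS.2.1

lemma rc_zero : rc S 0 = 0 := by simp [rc]

lemma rc_succ (j : ℕ) : rc S (j+1) = rc S j + if S j < S (j+1) then 1 else 0 := by
  unfold rc
  rw [show Finset.Icc 1 (j+1) = insert (j+1) (Finset.Icc 1 j) by
    ext x; simp [Finset.mem_Icc]; omega]
  rw [Finset.filter_insert]
  rw [show (j + 1) - 1 = j from rfl]
  by_cases h : S j < S (j+1)
  · rw [if_pos h, if_pos h, Finset.card_insert_of_notMem (by simp [Finset.mem_Icc])]
  · rw [if_neg h, if_neg h]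
    omega

lemma rc_succ' {e : ℕ} (he : 1 ≤ e) :
    rc S e = rc S (e-1) + if S (e-1) < S e then 1 else 0 := by
  obtain ⟨k, rfl⟩ : ∃ k, e = k + 1 := ⟨e - 1, by omega⟩
  rw [show k + 1 - 1 = k from rfl]
  exact rc_succ k

lemma rc_nonrise {e : ℕ} (he : 1 ≤ e) (h : ¬ S (e-1) < S e) :
    rc S e = rc S (e-1) := by
  rw [rc_succ' he, if_neg h]
  omega

lemma rc_mono {a b : ℕ} (h : a ≤ b) : rc S a ≤ rc S b := by
  induction b with
  | zero => have : a = 0 := by omega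
            rw [this]
  | succ n ih =>
    rcases Nat.lt_or_ge a (n+1) with h2 | h2
    · rw [rc_succ]; have := ih (by omega); split <;> omega
    · have : a = n + 1 := by omega
      rw [this]

lemma rc_le {a b : ℕ} (h : a ≤ b) : rc S b ≤ rc S a + (b - a) := by
  induction b with
  | zero => have : a = 0 := by omega
            rw [this]; omega
  | succ n ih =>
    rcases Nat.lt_or_ge a (n+1) with h2 | h2
    · rw [rc_succ]; have := ih (by omega); split <;> omega
    · have : a = n + 1 := by omega
      rw [this]; omega

lemma rc_le_self {e : ℕ} (he : 1 ≤ e) (h : ¬ S (e-1) < S e) : rc S e ≤ e - 1 := by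
  have h1 := rc_nonrise he h
  have h2 : rc S (e-1) ≤ rc S 0 + (e - 1 - 0) := rc_le (by omega)
  rw [rc_zero] at h2; omega

lemma L6 (hS : IsSPath m S) {a b : ℕ} (hab : a ≤ b) (hb : b ≤ m) :
    S a + rc S b ≤ S b + rc S a := by
  induction b with
  | zero => have : a = 0 := by omega
            rw [this]
  | succ n ih =>
    rcases Nat.lt_or_ge a (n+1) with h2 | h2
    · have h3 := ih (by omega) (by omega)
      have h4 := rc_succ (S := S) n
      by_cases h5 : S n < S (n+1)
      · rw [if_pos h5] at h4; omega
      · rw [if_neg h5] at h4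
        have := step hS (show n < m by omega)
        omega
    · have : a = n + 1 := by omega
      rw [this]

lemma rc_le_S (hS : IsSPath m S) {j : ℕ} (hj : j ≤ m) : rc S j ≤ S j := by
  have := L6 hS (Nat.zero_le j) hj
  rw [hS.1, rc_zero] at this; omega

lemma rise_m (hS : IsSPath m S) (hm : 1 ≤ m) : S (m-1) < S m := by
  have h1 : S (m-1) ≤ m - 1 := S_le hS (by omega)
  rw [hS.2.1]; omega

lemma m_mem_set (hS : IsSPath m S) {e : ℕ} (he1 : 1 ≤ e) (he2 : e ≤ m) :
    m ∈ {j | S (j-1) < S j ∧ j ≤ m ∧ e + rc S j ≤ S j + rc S e} := by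
  refine ⟨rise_m hS (by omega), le_refl m, ?_⟩
  have h1 : rc S m ≤ rc S e + (m - e) := rc_le he2
  rw [hS.2.1]; omega

lemma M_mem (hS : IsSPath m S) {e : ℕ} (he1 : 1 ≤ e) (he2 : e ≤ m)
    (hne : ¬ S (e-1) < S e) :
    M m S e ∈ {j | S (j-1) < S j ∧ j ≤ m ∧ e + rc S j ≤ S j + rc S e} := by
  rw [M, if_neg hne]
  exact Nat.sInf_mem ⟨m, m_mem_set hS he1 he2⟩

lemma M_rise (hS : IsSPath m S) {e : ℕ} (he1 : 1 ≤ e) (he2 : e ≤ m) :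
    S (M m S e - 1) < S (M m S e) ∧ M m S e ≤ m := by
  by_cases h : S (e-1) < S e
  · rw [M, if_pos h]; exact ⟨h, he2⟩
  · have := M_mem hS he1 he2 h
    exact ⟨this.1, this.2.1⟩

lemma le_M (hS : IsSPath m S) {e : ℕ} (he1 : 1 ≤ e) (he2 : e ≤ m) : e ≤ M m S e := by
  by_cases h : S (e-1) < S e
  · rw [M, if_pos h]
  · obtain ⟨hr, hle, hineq⟩ := M_mem hS he1 he2 h
    set j0 := M m S e with hj0
    by_contra hlt
    push_neg at hlt
    have hj0e : j0 < e := by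
      rcases Nat.lt_or_ge j0 e with h2 | h2
      · exact h2
      · exfalso; have : j0 = e := by omega
        rw [this] at hr; exact h hr
    have h1 : rc S e = rc S (e-1) := rc_nonrise he1 h
    have h2 : rc S (e-1) ≤ rc S j0 + (e - 1 - j0) := rc_le (by omega)
    have h3 : S j0 ≤ j0 := S_le hS hle
    omega

lemma M_le_iff (hS : IsSPath m S) {e j : ℕ} (he1 : 1 ≤ e) (he2 : e ≤ m)
    (hne : ¬ S (e-1) < S e) (hjr : S (j-1) < S j) (hj2 : j ≤ m) :
    M m S e ≤ j ↔ e + rc S j ≤ S j + rc S e := by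
  constructor
  · intro hle
    obtain ⟨hr, hm', hineq⟩ := M_mem hS he1 he2 hne
    have := L6 hS hle hj2
    omega
  · intro hineq
    rw [M, if_neg hne]
    exact Nat.sInf_le ⟨hjr, hj2, hineq⟩

lemma count (hS : IsSPath m S) (c : ℕ) (hc : c + rc S m ≤ m) :
    ((Finset.Icc 1 m).filter
      (fun e => ¬ S (e-1) < S e ∧ e ≤ c + rc S e)).card = c := by
  have hb : ((Finset.Icc 1 m).filter
      (fun e => ¬ S (e-1) < S e ∧ e ≤ c + rc S e)).card = (Finset.Icc 1 c).card := by
    apply Finset.card_bij (fun e _ => e - rc S e)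
    · intro e he
      simp only [Finset.mem_filter, Finset.mem_Icc] at he
      obtain ⟨⟨he1, he2⟩, hne, hle⟩ := he
      have h4 := rc_le_self he1 hne
      simp only [Finset.mem_Icc]
      omega
    · intro e he e' he' heq
      simp only [Finset.mem_filter, Finset.mem_Icc] at he he'
      obtain ⟨⟨he1, he2⟩, hne, hle⟩ := he
      obtain ⟨⟨he1', he2'⟩, hne', hle'⟩ := he'
      by_contra hneq
      rcases Nat.lt_or_ge e e' with h | h
      · have h1 : rc S e' = rc S (e'-1) := rc_nonrise he1' hne'
        have h2 : rc S (e'-1) ≤ rc S e + (e' - 1 - e) := rc_le (by omega)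
        have h3 : rc S e ≤ rc S (e'-1) := rc_mono (by omega)
        have h4 := rc_le_self he1 hne
        omega
      · rcases Nat.lt_or_ge e' e with h' | h'
        · have h1 : rc S e = rc S (e-1) := rc_nonrise he1 hne
          have h2 : rc S (e-1) ≤ rc S e' + (e - 1 - e') := rc_le (by omega)
          have h3 : rc S e' ≤ rc S (e-1) := rc_mono (by omega)
          have h4 := rc_le_self he1' hne'
          omega
        · omega
    · intro t0 ht0
      simp only [Finset.mem_Icc] at ht0
      have H : ∃ e, t0 + rc S e ≤ e := ⟨m, by omega⟩
      have hspec : t0 + rc S (Nat.find H) ≤ Nat.find H := Nat.find_spec H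
      set E := Nat.find H with hE
      have hEm : E ≤ m := Nat.find_min' H (by omega)
      have hE1 : 1 ≤ E := by
        by_contra h
        have h0 : E = 0 := by omega
        rw [h0, rc_zero] at hspec; omega
      have hmin : ¬ (t0 + rc S (E-1) ≤ E - 1) := Nat.find_min H (by omega)
      have hrs := rc_succ' (S := S) hE1
      have hmono : rc S (E-1) ≤ rc S E := rc_mono (by omega)
      have hnr : ¬ S (E-1) < S E := by
        intro hr
        rw [if_pos hr] at hrs
        omega
      rw [if_neg hnr] at hrs
      refine ⟨E, ?_, ?_⟩
      · simp only [Finset.mem_filter, Finset.mem_Icc]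
        exact ⟨⟨hE1, hEm⟩, hnr, by omega⟩
      · omega
  rw [hb, Nat.card_Icc]
  omega

lemma N_rise (hS : IsSPath m S) {j : ℕ} (hj1 : 1 ≤ j) (hj2 : j ≤ m)
    (hjr : S (j-1) < S j) :
    ((Finset.Icc 1 m).filter (fun e => M m S e ≤ j)).card = S j := by
  set A := (Finset.Icc 1 m).filter (fun e => M m S e ≤ j) with hA
  have hsplit := Finset.card_filter_add_card_filter_not
    (s := A) (p := fun e => S (e-1) < S e)
  have h1 : A.filter (fun e => S (e-1) < S e)
      = (Finset.Icc 1 j).filter (fun i => S (i-1) < S i) := by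
    ext e
    simp only [hA, Finset.mem_filter, Finset.mem_Icc]
    constructor
    · rintro ⟨⟨⟨he1, he2⟩, hM⟩, hr⟩
      have hMe : M m S e = e := by rw [M, if_pos hr]
      exact ⟨⟨he1, by omega⟩, hr⟩
    · rintro ⟨⟨he1, he2⟩, hr⟩
      have hMe : M m S e = e := by rw [M, if_pos hr]
      exact ⟨⟨⟨he1, by omega⟩, by omega⟩, hr⟩
  have hcS : rc S j ≤ S j := rc_le_S hS hj2
  have h2 : A.filter (fun e => ¬ S (e-1) < S e)
      = (Finset.Icc 1 m).filter
          (fun e => ¬ S (e-1) < S e ∧ e ≤ (S j - rc S j) + rc S e) := by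
    ext e
    simp only [hA, Finset.mem_filter, Finset.mem_Icc]
    constructor
    · rintro ⟨⟨⟨he1, he2⟩, hM⟩, hnr⟩
      have := (M_le_iff hS he1 he2 hnr hjr hj2).mp hM
      exact ⟨⟨he1, he2⟩, hnr, by omega⟩
    · rintro ⟨⟨he1, he2⟩, hnr, hle⟩
      refine ⟨⟨⟨he1, he2⟩, ?_⟩, hnr⟩
      exact (M_le_iff hS he1 he2 hnr hjr hj2).mpr (by omega)
  have hc : (S j - rc S j) + rc S m ≤ m := by
    have := L6 hS hj2 (le_refl m)
    rw [hS.2.1] at this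
    omega
  have hcount := count hS (S j - rc S j) hc
  rw [h1, h2, hcount] at hsplit
  have hrc : ((Finset.Icc 1 j).filter (fun i => S (i-1) < S i)).card = rc S j := rfl
  omega

lemma N_eq (hS : IsSPath m S) : ∀ j, j ≤ m →
    ((Finset.Icc 1 m).filter (fun e => M m S e ≤ j)).card = S j := by
  intro j
  induction j with
  | zero =>
    intro _
    rw [hS.1]
    convert Finset.card_empty
    ext e
    simp only [Finset.mem_filter, Finset.mem_Icc, Finset.notMem_empty, iff_false]
    rintro ⟨⟨he1, he2⟩, hM⟩
    have := le_M hS he1 he2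
    omega
  | succ n ih =>
    intro hn
    by_cases hr : S ((n+1)-1) < S (n+1)
    · exact N_rise hS (by omega) hn hr
    · have hAeq : (Finset.Icc 1 m).filter (fun e => M m S e ≤ n + 1)
          = (Finset.Icc 1 m).filter (fun e => M m S e ≤ n) := by
        ext e
        simp only [Finset.mem_filter, Finset.mem_Icc]
        constructor
        · rintro ⟨⟨he1, he2⟩, hM⟩
          refine ⟨⟨he1, he2⟩, ?_⟩
          rcases Nat.lt_or_ge (M m S e) (n+1) with h | h
          · omega
          · exfalso
            have heq : M m S e = n + 1 := by omega
            have h5 := (M_rise hS he1 he2).1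
            rw [heq] at h5
            exact hr h5
        · rintro ⟨⟨he1, he2⟩, hM⟩
          exact ⟨⟨he1, he2⟩, by omega⟩
      have hSeq : S (n+1) = S n := by
        have := step hS (show n < m by omega)
        rw [show (n+1)-1 = n from rfl] at hr
        omega
      rw [hAeq, hSeq]
      exact ih (by omega)

lemma cell_card (hS : IsSPath m S) {j : ℕ} (hj1 : 1 ≤ j) (hj2 : j ≤ m) :
    (cell m S j).card = S j - S (j-1) := by
  set A := (Finset.Icc 1 m).filter (fun e => M m S e ≤ j) with hA
  have hsplit := Finset.card_filter_add_card_filter_not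
    (s := A) (p := fun e => M m S e ≤ j - 1)
  have h1 : A.filter (fun e => M m S e ≤ j - 1)
      = (Finset.Icc 1 m).filter (fun e => M m S e ≤ j - 1) := by
    ext e
    simp only [hA, Finset.mem_filter]
    constructor
    · rintro ⟨⟨h1, h2⟩, h3⟩; exact ⟨h1, h3⟩
    · rintro ⟨h1, h3⟩; exact ⟨⟨h1, by omega⟩, h3⟩
  have h2 : A.filter (fun e => ¬ M m S e ≤ j - 1) = cell m S j := by
    ext e
    simp only [hA, cell, Finset.mem_filter]
    constructor
    · rintro ⟨⟨h1, h2⟩, h3⟩; exact ⟨h1, by omega⟩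
    · rintro ⟨h1, h2⟩; exact ⟨⟨h1, by omega⟩, by omega⟩
  have hNj := N_eq hS j hj2
  have hNj1 := N_eq hS (j-1) (by omega)
  rw [h1, h2] at hsplit
  rw [← hA] at hNj
  have hmono := mono hS (show j - 1 ≤ j by omega) hj2
  omega

lemma M_self {j : ℕ} (hjr : S (j-1) < S j) : M m S j = j := by
  rw [M, if_pos hjr]

lemma mem_cell_self {j : ℕ} (hj1 : 1 ≤ j) (hj2 : j ≤ m) (hjr : S (j-1) < S j) :
    j ∈ cell m S j :=
  Finset.mem_filter.mpr ⟨Finset.mem_Icc.mpr ⟨hj1, hj2⟩, M_self hjr⟩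

lemma cell_max (hS : IsSPath m S) {j : ℕ} (hj1 : 1 ≤ j) (hj2 : j ≤ m)
    (hjr : S (j-1) < S j) : (cell m S j).max = (j : WithBot ℕ) := by
  apply le_antisymm
  · apply Finset.max_le
    intro b hb
    obtain ⟨hbIcc, hbM⟩ := Finset.mem_filter.mp hb
    obtain ⟨hb1, hb2⟩ := Finset.mem_Icc.mp hbIcc
    have hle : b ≤ M m S b := le_M hS hb1 hb2
    rw [hbM] at hle
    exact WithBot.coe_le_coe.mpr hle
  · exact Finset.le_max (mem_cell_self hj1 hj2 hjr)

end SPathAux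

open SPathAux in
/-- Every S-path of `m+1` coordinates corresponds to at least one partition of `{1,…,m}`. -/
theorem correspondsTo_nonempty (m : ℕ) (S : ℕ → ℕ) (hS : IsSPath m S) :
    {P : Finset (Finset ℕ) | CorrespondsTo m S P}.Nonempty := by
  refine ⟨part m S, ?_, ?_, ?_⟩
  · -- IsPartitionOf
    constructor
    · intro C hC
      simp only [part, Finset.mem_image, Finset.mem_filter, Finset.mem_Icc] at hC
      obtain ⟨j, ⟨⟨hj1, hj2⟩, hjr⟩, rfl⟩ := hC
      exact ⟨⟨j, mem_cell_self hj1 hj2 hjr⟩, Finset.filter_subset _ _⟩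
    · intro i hi
      obtain ⟨hi1, hi2⟩ := Finset.mem_Icc.mp hi
      have hMr := (M_rise hS hi1 hi2).1
      have hMm := (M_rise hS hi1 hi2).2
      have hM1 : 1 ≤ M m S i := le_trans hi1 (le_M hS hi1 hi2)
      refine ⟨cell m S (M m S i), ⟨?_, ?_⟩, ?_⟩
      · simp only [part, Finset.mem_image, Finset.mem_filter, Finset.mem_Icc]
        exact ⟨M m S i, ⟨⟨hM1, hMm⟩, hMr⟩, rfl⟩
      · exact Finset.mem_filter.mpr ⟨Finset.mem_Icc.mpr ⟨hi1, hi2⟩, rfl⟩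
      · rintro C ⟨hC, hiC⟩
        simp only [part, Finset.mem_image, Finset.mem_filter, Finset.mem_Icc] at hC
        obtain ⟨j, ⟨⟨hj1, hj2⟩, hjr⟩, rfl⟩ := hC
        have := (Finset.mem_filter.mp hiC).2
        rw [← this]
  · -- each cell has the right max and card
    intro C hC
    simp only [part, Finset.mem_image, Finset.mem_filter, Finset.mem_Icc] at hC
    obtain ⟨j, ⟨⟨hj1, hj2⟩, hjr⟩, rfl⟩ := hC
    exact ⟨j, cell_max hS hj1 hj2 hjr, hjr, cell_card hS hj1 hj2⟩
  · -- each rise has a cell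
    intro j hj hjr
    obtain ⟨hj1, hj2⟩ := Finset.mem_Icc.mp hj
    refine ⟨cell m S j, ?_, cell_max hS hj1 hj2 hjr⟩
    simp only [part, Finset.mem_image, Finset.mem_filter, Finset.mem_Icc]
    exact ⟨j, ⟨⟨hj1, hj2⟩, hjr⟩, rfl⟩
end

section
/- Every partition of {1,...,m} corresponds to exactly one S-path of m+1 coordinates; i.e., the sets C_S for distinct S-paths S partition the set of all partitions of {1,...,m}. -/
/-!
The S-path of a partition `P` is forced: `S j` must be the number of elements lying in cells
whose maximum is at most `j`. Indeed, monotonicity of an S-path together with the two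
correspondence conditions says exactly that `S j - S (j - 1)` is the size of the cell with
maximum `j`, or `0` if there is none; so `S` is determined by `S 0 = 0` and these increments,
and conversely the cumulative cell sizes form an S-path corresponding to `P`.
-/

open Finset

def blockCardAt (P : Finset (Finset ℕ)) (j : ℕ) : ℕ :=
  ∑ C ∈ P with C.max = (j : WithBot ℕ), C.card

def spathOf (P : Finset (Finset ℕ)) (j : ℕ) : ℕ :=
  ∑ C ∈ P with C.max ≤ (j : WithBot ℕ), C.card

theorem spathOf_mono (P : Finset (Finset ℕ)) : Monotone (spathOf P) := by
  intro j k hjk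
  refine sum_le_sum_of_subset (monotone_filter_right _ fun C _ hCj => hCj.trans ?_)
  exact_mod_cast hjk

theorem WithBot.le_natCast_iff_le_sub_one_or_eq {x : WithBot ℕ} {j : ℕ} (hj : 1 ≤ j) :
    x ≤ j ↔ x ≤ ((j - 1 : ℕ) : WithBot ℕ) ∨ x = j := by
  induction x with
  | bot => simp
  | coe n =>
    simp only [Nat.cast_withBot, WithBot.coe_le_coe, WithBot.coe_inj]
    omega

theorem spathOf_eq_add (P : Finset (Finset ℕ)) {j : ℕ} (hj : 1 ≤ j) :
    spathOf P j = spathOf P (j - 1) + blockCardAt P j := by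
  have hdisj : Disjoint {C ∈ P | C.max ≤ ((j - 1 : ℕ) : WithBot ℕ)}
      {C ∈ P | C.max = (j : WithBot ℕ)} := by
    refine disjoint_filter_filter' _ _ fun p hle heq C hC => ?_
    have : j ≤ j - 1 := by exact_mod_cast (heq C hC).symm.trans_le (hle C hC)
    omega
  rw [spathOf, spathOf, blockCardAt, ← sum_union hdisj, ← filter_or]
  simp only [WithBot.le_natCast_iff_le_sub_one_or_eq hj]

namespace IsPartitionOf

variable {m : ℕ} {P : Finset (Finset ℕ)}

theorem eq_of_mem_of_mem (hP : IsPartitionOf m P) {C D : Finset ℕ} (hC : C ∈ P) (hD : D ∈ P)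
    {i : ℕ} (hiC : i ∈ C) (hiD : i ∈ D) : C = D :=
  (hP.2 i ((hP.1 C hC).2 hiC)).unique ⟨hC, hiC⟩ ⟨hD, hiD⟩

theorem pairwiseDisjoint (hP : IsPartitionOf m P) : (P : Set (Finset ℕ)).PairwiseDisjoint id :=
  fun _ hC _ hD hne =>
    disjoint_left.mpr fun _ hiC hiD => hne (hP.eq_of_mem_of_mem hC hD hiC hiD)

theorem exists_max_eq (hP : IsPartitionOf m P) {C : Finset ℕ} (hC : C ∈ P) :
    ∃ j ∈ Icc 1 m, C.max = (j : WithBot ℕ) := by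
  obtain ⟨hne, hsub⟩ := hP.1 C hC
  exact ⟨C.max' hne, hsub (C.max'_mem hne), (coe_max' hne).symm⟩

theorem biUnion_eq (hP : IsPartitionOf m P) : P.biUnion id = Icc 1 m := by
  refine Subset.antisymm (biUnion_subset.mpr fun C hC => (hP.1 C hC).2) fun i hi => ?_
  obtain ⟨C, ⟨hC, hiC⟩, -⟩ := hP.2 i hi
  exact mem_biUnion.mpr ⟨C, hC, hiC⟩

theorem sum_card (hP : IsPartitionOf m P) {T : Finset (Finset ℕ)} (hT : T ⊆ P) :
    ∑ C ∈ T, C.card = (T.biUnion id).card :=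
  (card_biUnion (hP.pairwiseDisjoint.subset (coe_subset.mpr hT))).symm

theorem blockCardAt_eq_card (hP : IsPartitionOf m P) {C : Finset ℕ} (hC : C ∈ P) {j : ℕ}
    (hCj : C.max = (j : WithBot ℕ)) : blockCardAt P j = C.card := by
  refine sum_eq_single_of_mem C (mem_filter.mpr ⟨hC, hCj⟩) fun D hD hDC => ?_
  obtain ⟨hD, hDj⟩ := mem_filter.mp hD
  exact absurd (hP.eq_of_mem_of_mem hD hC (mem_of_max hDj) (mem_of_max hCj)) hDC

theorem blockCardAt_pos_iff (hP : IsPartitionOf m P) {j : ℕ} :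
    0 < blockCardAt P j ↔ ∃ C ∈ P, C.max = (j : WithBot ℕ) := by
  constructor
  · intro hpos
    obtain ⟨C, hC, -⟩ := exists_ne_zero_of_sum_ne_zero hpos.ne'
    exact ⟨C, (mem_filter.mp hC).1, (mem_filter.mp hC).2⟩
  · rintro ⟨C, hC, hCj⟩
    rw [hP.blockCardAt_eq_card hC hCj]
    exact card_pos.mpr (hP.1 C hC).1

theorem spathOf_le (hP : IsPartitionOf m P) (j : ℕ) : spathOf P j ≤ j := by
  have hsub : {C ∈ P | C.max ≤ (j : WithBot ℕ)}.biUnion id ⊆ Icc 1 j := by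
    refine biUnion_subset.mpr fun C hC i hiC => ?_
    obtain ⟨hC, hCj⟩ := mem_filter.mp hC
    have hi1 : 1 ≤ i := (mem_Icc.mp ((hP.1 C hC).2 hiC)).1
    have hij : (i : WithBot ℕ) ≤ j := (le_max hiC).trans hCj
    exact mem_Icc.mpr ⟨hi1, WithBot.coe_le_coe.mp hij⟩
  calc spathOf P j = ({C ∈ P | C.max ≤ (j : WithBot ℕ)}.biUnion id).card :=
        hP.sum_card (filter_subset _ _)
    _ ≤ (Icc 1 j).card := card_le_card hsub
    _ = j := by simp

theorem spathOf_self (hP : IsPartitionOf m P) : spathOf P m = m := by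
  have hall : {C ∈ P | C.max ≤ (m : WithBot ℕ)} = P := by
    refine filter_true_of_mem fun C hC => ?_
    obtain ⟨j, hj, hCj⟩ := hP.exists_max_eq hC
    rw [hCj]
    exact_mod_cast (mem_Icc.mp hj).2
  rw [spathOf, hall, hP.sum_card Subset.rfl, hP.biUnion_eq, Nat.card_Icc, Nat.add_sub_cancel]

theorem isSPath_spathOf (hP : IsPartitionOf m P) : IsSPath m (spathOf P) :=
  ⟨Nat.le_zero.mp (hP.spathOf_le 0), hP.spathOf_self,
    fun j _ _ => le_min (hP.spathOf_le j) (spathOf_mono P j.le_succ)⟩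

end IsPartitionOf

theorem IsSPath.sub_one_le {m : ℕ} {S : ℕ → ℕ} (hS : IsSPath m S) {j : ℕ} (hj : j ≤ m) :
    S (j - 1) ≤ S j := by
  rcases Nat.lt_or_ge j 2 with hj2 | hj2
  · interval_cases j <;> simp [hS.1]
  · have h := hS.2.2 (j - 1) (by omega) (by omega)
    rw [Nat.sub_add_cancel (by omega)] at h
    exact h.trans (min_le_right _ _)

namespace CorrespondsTo

variable {m : ℕ} {S : ℕ → ℕ} {P : Finset (Finset ℕ)}

theorem of_eq_add (hP : IsPartitionOf m P)
    (hS : ∀ j ∈ Icc 1 m, S j = S (j - 1) + blockCardAt P j) : CorrespondsTo m S P := by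
  refine ⟨hP, fun C hC => ?_, fun j hj hlt => ?_⟩
  · obtain ⟨j, hj, hCj⟩ := hP.exists_max_eq hC
    have hinc := hS j hj
    rw [hP.blockCardAt_eq_card hC hCj] at hinc
    have hpos : 0 < C.card := card_pos.mpr (hP.1 C hC).1
    exact ⟨j, hCj, by omega, by omega⟩
  · exact hP.blockCardAt_pos_iff.mp (by have := hS j hj; omega)

theorem eq_add (h : CorrespondsTo m S P) (hmono : ∀ j ≤ m, S (j - 1) ≤ S j) :
    ∀ j ∈ Icc 1 m, S j = S (j - 1) + blockCardAt P j := by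
  intro j hj
  by_cases hex : ∃ C ∈ P, C.max = (j : WithBot ℕ)
  · obtain ⟨C, hC, hCj⟩ := hex
    obtain ⟨k, hCk, hlt, hcard⟩ := h.2.1 C hC
    obtain rfl : k = j := WithBot.coe_injective (hCk.symm.trans hCj)
    rw [h.1.blockCardAt_eq_card hC hCj]
    omega
  · have hzero : blockCardAt P j = 0 := by
      by_contra hne
      exact hex (h.1.blockCardAt_pos_iff.mp (Nat.pos_of_ne_zero hne))
    have hnlt : ¬ S (j - 1) < S j := fun hlt => hex (h.2.2 j hj hlt)
    have := hmono j (mem_Icc.mp hj).2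
    omega

theorem eq_spathOf (hS : IsSPath m S) (h : CorrespondsTo m S P) :
    ∀ j ≤ m, S j = spathOf P j := by
  have hinc := h.eq_add fun j hj => hS.sub_one_le hj
  intro j hj
  induction j with
  | zero => rw [hS.1, Nat.le_zero.mp (h.1.spathOf_le 0)]
  | succ j ih =>
    rw [hinc (j + 1) (mem_Icc.mpr ⟨j.succ_pos, hj⟩), spathOf_eq_add P j.succ_pos,
      Nat.add_sub_cancel, ih (by omega)]

end CorrespondsTo

/-- Every partition of `{1,…,m}` corresponds to exactly one S-path of `m+1` coordinates
(unique as a function on the coordinates `0,…,m`); i.e. the classes `C_S` partition the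
set of all partitions of `{1,…,m}`. -/
theorem existsUnique_spath_of_partition (m : ℕ) (P : Finset (Finset ℕ))
    (hP : IsPartitionOf m P) :
    ∃ S : ℕ → ℕ, (IsSPath m S ∧ CorrespondsTo m S P) ∧
      ∀ S' : ℕ → ℕ, IsSPath m S' → CorrespondsTo m S' P → ∀ j ≤ m, S' j = S j :=
  ⟨spathOf P,
    ⟨hP.isSPath_spathOf,
      CorrespondsTo.of_eq_add hP fun _ hj => spathOf_eq_add P (mem_Icc.mp hj).1⟩,
    fun _ hS' hC' => hC'.eq_spathOf hS'⟩
end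

section
/- Summing the product formula over all S-paths recovers the total number of set partitions: the sum, over all S-paths S of m+1 coordinates, of ∏_{j: S_j > S_{j-1}} C(j-1-S_{j-1}, j-S_j) equals the Bell number B_m. -/
open scoped Classical

/-- A tuple `S : Fin (m+1) → Fin (m+1)` regarded as a function `ℕ → ℕ`. -/
def pathFun (m : ℕ) (S : Fin (m + 1) → Fin (m + 1)) : ℕ → ℕ :=
  fun j => if h : j < m + 1 then (S ⟨j, h⟩ : ℕ) else j

/-!
For a partition `P` of `{1,…,m}` let `S_j` be the number of elements lying in blocks contained
in `{1,…,j}`; this is an S-path. Partitions with a given S-path are built from the left: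
if `S_j = S_{j-1}` no block has maximum `j`, and if `S_j > S_{j-1}` exactly one does, namely `j`
together with `S_j - S_{j-1} - 1` of the `j - 1 - S_{j-1}` elements of `{1,…,j-1}` not yet in a
closed block. Hence `C(j-1-S_{j-1}, S_j-S_{j-1}-1) = C(j-1-S_{j-1}, j-S_j)` choices at step `j`,
the product counts the partitions with S-path `S`, and summing over `S` counts all partitions.
-/

open Finset

/-- The S-path of a partition `P` of `{1,…,m}` is `j ↦ closedCard P j`. -/
def closedCard (F : Finset (Finset ℕ)) (j : ℕ) : ℕ :=
  ∑ C ∈ F with C ⊆ Icc 1 j, #C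

def IsPartialPartition (t : ℕ) (F : Finset (Finset ℕ)) : Prop :=
  (∀ C ∈ F, C ⊆ Icc 1 t) ∧ (F : Set (Finset ℕ)).PairwiseDisjoint id ∧ ∅ ∉ F

section closedCard

variable {F : Finset (Finset ℕ)} {B : Finset ℕ} {j : ℕ}

lemma closedCard_mono (F : Finset (Finset ℕ)) {k : ℕ} (h : j ≤ k) :
    closedCard F j ≤ closedCard F k :=
  sum_le_sum_of_subset fun _ hC =>
    mem_filter.2 ⟨(mem_filter.1 hC).1, (mem_filter.1 hC).2.trans (Icc_subset_Icc_right h)⟩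

lemma closedCard_eq_sum (h : ∀ C ∈ F, C ⊆ Icc 1 j) : closedCard F j = ∑ C ∈ F, #C := by
  rw [closedCard, filter_true_of_mem h]

lemma closedCard_insert_of_not_subset (hB : ¬B ⊆ Icc 1 j) :
    closedCard (insert B F) j = closedCard F j := by
  rw [closedCard, filter_insert, if_neg hB, closedCard]

lemma closedCard_insert_of_subset (hBF : B ∉ F) (hB : B ⊆ Icc 1 j) :
    closedCard (insert B F) j = #B + closedCard F j := by
  rw [closedCard, filter_insert, if_pos hB, sum_insert fun h => hBF (mem_filter.1 h).1, closedCard]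

lemma closedCard_filter_subset_Icc (F : Finset (Finset ℕ)) {u : ℕ} (h : j ≤ u) :
    closedCard (F.filter (· ⊆ Icc 1 u)) j = closedCard F j := by
  rw [closedCard, closedCard, filter_filter]
  exact sum_congr (filter_congr fun C _ => and_iff_right_of_imp fun hC =>
    hC.trans (Icc_subset_Icc_right h)) fun _ _ => rfl

end closedCard

namespace IsPartialPartition

variable {F G : Finset (Finset ℕ)} {A B : Finset ℕ} {t : ℕ}

lemma mono (hF : IsPartialPartition t F) {u : ℕ} (h : t ≤ u) : IsPartialPartition u F :=
  ⟨fun C hC => (hF.1 C hC).trans (Icc_subset_Icc_right h), hF.2⟩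

lemma card_biUnion (hF : IsPartialPartition t F) : #(F.biUnion id) = closedCard F t := by
  rw [Finset.card_biUnion hF.2.1, closedCard_eq_sum hF.1]
  rfl

lemma biUnion_subset (hF : IsPartialPartition t F) : F.biUnion id ⊆ Icc 1 t :=
  Finset.biUnion_subset.2 hF.1

lemma filter_subset_Icc (hF : IsPartialPartition t F) (u : ℕ) :
    IsPartialPartition u (F.filter (· ⊆ Icc 1 u)) :=
  ⟨fun _ hC => (mem_filter.1 hC).2, hF.2.1.subset (coe_subset.2 (filter_subset _ _)),
    fun h => hF.2.2 (mem_filter.1 h).1⟩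

lemma closedCard_le (hF : IsPartialPartition t F) (j : ℕ) : closedCard F j ≤ j := by
  have hFj := hF.filter_subset_Icc j
  have := card_le_card hFj.biUnion_subset
  rwa [hFj.card_biUnion, Nat.card_Icc, Nat.add_sub_cancel,
    closedCard, filter_filter, filter_congr fun _ _ => and_self_iff] at this

lemma insert_insert (hF : IsPartialPartition t F) (hA : A ⊆ Icc 1 t \ F.biUnion id) :
    IsPartialPartition (t + 1) (insert (insert (t + 1) A) F) := by
  refine ⟨?_, ?_, ?_⟩
  · intro C hC
    rcases mem_insert.1 hC with rfl | hC
    · intro x hx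
      rcases mem_insert.1 hx with rfl | hx
      · simp
      · exact Icc_subset_Icc_right t.le_succ (sdiff_subset (hA hx))
    · exact (hF.1 C hC).trans (Icc_subset_Icc_right t.le_succ)
  · rw [coe_insert]
    refine hF.2.1.insert fun C hC _ => disjoint_left.2 fun x hxB hxC => ?_
    rcases mem_insert.1 hxB with rfl | hxA
    · simpa using hF.1 C hC hxC
    · exact (mem_sdiff.1 (hA hxA)).2 (mem_biUnion.2 ⟨C, hC, hxC⟩)
  · rw [mem_insert, not_or]
    exact ⟨fun h => (insert_nonempty _ _).ne_empty h.symm, hF.2.2⟩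

lemma succ_mem_of_not_subset (hG : IsPartialPartition (t + 1) G) (hB : B ∈ G)
    (hBt : ¬B ⊆ Icc 1 t) : t + 1 ∈ B := by
  obtain ⟨x, hxB, hxt⟩ := not_subset.1 hBt
  have := mem_Icc.1 (hG.1 B hB hxB)
  rw [mem_Icc] at hxt
  obtain rfl : x = t + 1 := by omega
  exact hxB

lemma eq_insert_filter (hG : IsPartialPartition (t + 1) G) (hB : B ∈ G) (hBt : ¬B ⊆ Icc 1 t) :
    G = insert B (G.filter (· ⊆ Icc 1 t)) := by
  ext C
  rw [mem_insert, mem_filter]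
  by_cases hCt : C ⊆ Icc 1 t
  · exact ⟨fun hC => Or.inr ⟨hC, hCt⟩, fun h => h.elim (fun h => h ▸ hB) And.left⟩
  · refine ⟨fun hC => Or.inl ?_, fun h => h.elim (fun h => h ▸ hB) And.left⟩
    exact hG.2.1.elim_finset hC hB (t + 1) (hG.succ_mem_of_not_subset hC hCt)
      (hG.succ_mem_of_not_subset hB hBt)

lemma closedCard_succ (hG : IsPartialPartition (t + 1) G) (hB : B ∈ G) (hBt : ¬B ⊆ Icc 1 t) :
    closedCard G (t + 1) = #B + closedCard G t := by
  have hF := hG.filter_subset_Icc t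
  have hBF : B ∉ G.filter (· ⊆ Icc 1 t) := fun h => hBt (mem_filter.1 h).2
  conv_lhs => rw [hG.eq_insert_filter hB hBt]
  rw [closedCard_insert_of_subset hBF (hG.1 B hB),
    ← closedCard_filter_subset_Icc G le_rfl, closedCard_eq_sum hF.1,
    closedCard_eq_sum fun C hC => (hF.1 C hC).trans (Icc_subset_Icc_right t.le_succ)]

end IsPartialPartition

noncomputable def partialPartitionsWithPath (S : ℕ → ℕ) (t : ℕ) : Finset (Finset (Finset ℕ)) :=
  {F ∈ (Icc 1 t).powerset.powerset | IsPartialPartition t F ∧ ∀ j ≤ t, closedCard F j = S j}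

section partialPartitionsWithPath

variable {S : ℕ → ℕ} {t : ℕ} {F G : Finset (Finset ℕ)} {A : Finset ℕ}

lemma mem_partialPartitionsWithPath : F ∈ partialPartitionsWithPath S t ↔
    IsPartialPartition t F ∧ ∀ j ≤ t, closedCard F j = S j := by
  rw [partialPartitionsWithPath, mem_filter, and_iff_right_iff_imp]
  exact fun h => mem_powerset.2 fun C hC => mem_powerset.2 (h.1.1 C hC)

lemma partialPartitionsWithPath_zero (hS0 : S 0 = 0) : partialPartitionsWithPath S 0 = {∅} := by
  ext F
  rw [mem_partialPartitionsWithPath, mem_singleton]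
  constructor
  · rintro ⟨hF, -⟩
    refine eq_empty_of_forall_notMem fun C hC => hF.2.2 ?_
    simpa [subset_empty.1 (hF.1 C hC)] using hC
  · rintro rfl
    refine ⟨⟨by simp, by simp, by simp⟩, fun j hj => ?_⟩
    simp [closedCard, Nat.le_zero.1 hj, hS0]

lemma partialPartitionsWithPath_succ_of_eq (h : S (t + 1) = S t) :
    partialPartitionsWithPath S (t + 1) = partialPartitionsWithPath S t := by
  ext G
  simp only [mem_partialPartitionsWithPath]
  constructor
  · rintro ⟨hG, hpath⟩
    have hsub : ∀ C ∈ G, C ⊆ Icc 1 t := fun C hC => by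
      by_contra hCt
      have := hG.closedCard_succ hC hCt
      rw [hpath _ le_rfl, hpath t t.le_succ, h, right_eq_add, card_eq_zero] at this
      exact hG.2.2 (this ▸ hC)
    exact ⟨⟨hsub, hG.2⟩, fun j hj => hpath j (hj.trans t.le_succ)⟩
  · rintro ⟨hF, hpath⟩
    refine ⟨hF.mono t.le_succ, fun j hj => ?_⟩
    rcases hj.lt_or_eq with hj | rfl
    · exact hpath j (Nat.le_of_lt_succ hj)
    · rw [closedCard_eq_sum fun C hC => (hF.1 C hC).trans (Icc_subset_Icc_right t.le_succ),
        ← closedCard_eq_sum hF.1, h, hpath t le_rfl]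

lemma insert_insert_mem_partialPartitionsWithPath (hlt : S t < S (t + 1))
    (hF : F ∈ partialPartitionsWithPath S t)
    (hA : A ∈ powersetCard (S (t + 1) - S t - 1) (Icc 1 t \ F.biUnion id)) :
    insert (insert (t + 1) A) F ∈ partialPartitionsWithPath S (t + 1) := by
  obtain ⟨hF, hpath⟩ := mem_partialPartitionsWithPath.1 hF
  obtain ⟨hAsub, hAcard⟩ := mem_powersetCard.1 hA
  have htA : t + 1 ∉ A := fun h => by simpa using (mem_sdiff.1 (hAsub h)).1
  have hBt : ¬insert (t + 1) A ⊆ Icc 1 t := fun h => by simpa using h (mem_insert_self _ _)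
  have hG := hF.insert_insert hAsub
  refine mem_partialPartitionsWithPath.2 ⟨hG, fun j hj => ?_⟩
  rcases hj.lt_or_eq with hj | rfl
  · rw [closedCard_insert_of_not_subset fun h => hBt (h.trans (Icc_subset_Icc_right (by omega))),
      hpath j (by omega)]
  · rw [hG.closedCard_succ (mem_insert_self _ _) hBt, closedCard_insert_of_not_subset hBt,
      hpath t le_rfl, card_insert_of_notMem htA, hAcard]
    omega

lemma exists_insert_insert_eq_of_mem_partialPartitionsWithPath (hlt : S t < S (t + 1))
    (hG : G ∈ partialPartitionsWithPath S (t + 1)) :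
    ∃ F ∈ partialPartitionsWithPath S t,
      ∃ A ∈ powersetCard (S (t + 1) - S t - 1) (Icc 1 t \ F.biUnion id),
        insert (insert (t + 1) A) F = G := by
  obtain ⟨hG, hpath⟩ := mem_partialPartitionsWithPath.1 hG
  obtain ⟨B, hB, hBt⟩ : ∃ B ∈ G, ¬B ⊆ Icc 1 t := by
    by_contra! hsub
    rw [← hpath t t.le_succ, ← hpath _ le_rfl, closedCard_eq_sum hsub,
      closedCard_eq_sum fun C hC => (hsub C hC).trans (Icc_subset_Icc_right t.le_succ)] at hlt
    exact hlt.false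
  have hBcard : #B = S (t + 1) - S t := by
    have := hG.closedCard_succ hB hBt
    rw [hpath _ le_rfl, hpath t t.le_succ] at this
    omega
  have htB := hG.succ_mem_of_not_subset hB hBt
  refine ⟨G.filter (· ⊆ Icc 1 t), mem_partialPartitionsWithPath.2 ⟨hG.filter_subset_Icc t,
    fun j hj => by rw [closedCard_filter_subset_Icc G hj, hpath j (hj.trans t.le_succ)]⟩,
    B.erase (t + 1), mem_powersetCard.2 ⟨fun x hx => ?_, by rw [card_erase_of_mem htB, hBcard]⟩,
    by rw [insert_erase htB, ← hG.eq_insert_filter hB hBt]⟩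
  obtain ⟨hxt, hxB⟩ := mem_erase.1 hx
  have := mem_Icc.1 (hG.1 B hB hxB)
  refine mem_sdiff.2 ⟨mem_Icc.2 (by omega), fun hxF => ?_⟩
  obtain ⟨C, hC, hxC⟩ := mem_biUnion.1 hxF
  obtain ⟨hCG, hCt⟩ := mem_filter.1 hC
  exact hBt (hG.2.1.elim_finset hCG hB x hxC hxB ▸ hCt)

lemma card_partialPartitionsWithPath_succ_of_lt (hlt : S t < S (t + 1)) :
    #(partialPartitionsWithPath S (t + 1)) =
      #(partialPartitionsWithPath S t) * (t - S t).choose (S (t + 1) - S t - 1) := by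
  set k := S (t + 1) - S t - 1
  have hfiber : ∀ F ∈ partialPartitionsWithPath S t,
      #(powersetCard k (Icc 1 t \ F.biUnion id)) = (t - S t).choose k := fun F hF => by
    obtain ⟨hF, hpath⟩ := mem_partialPartitionsWithPath.1 hF
    rw [card_powersetCard, card_sdiff_of_subset hF.biUnion_subset, Nat.card_Icc, hF.card_biUnion,
      hpath t le_rfl, Nat.add_sub_cancel]
  have hfilter : ∀ F ∈ partialPartitionsWithPath S t, ∀ A : Finset ℕ,
      (insert (insert (t + 1) A) F).filter (· ⊆ Icc 1 t) = F := fun F hF A => by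
    rw [filter_insert, if_neg (by simp [insert_subset_iff]),
      filter_true_of_mem (mem_partialPartitionsWithPath.1 hF).1.1]
  rw [← smul_eq_mul, ← sum_const, ← sum_congr rfl hfiber, ← card_sigma]
  symm
  refine card_bij (fun p _ => insert (insert (t + 1) p.2) p.1)
    (fun p hp => insert_insert_mem_partialPartitionsWithPath hlt (mem_sigma.1 hp).1
      (mem_sigma.1 hp).2) ?_ fun G hG => ?_
  · rintro ⟨F₁, A₁⟩ hp₁ ⟨F₂, A₂⟩ hp₂ h
    obtain ⟨hF₁, hA₁⟩ := mem_sigma.1 hp₁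
    obtain ⟨hF₂, hA₂⟩ := mem_sigma.1 hp₂
    have hF : F₁ = F₂ := by rw [← hfilter F₁ hF₁ A₁, ← hfilter F₂ hF₂ A₂]; exact congrArg _ h
    subst hF
    have hB₁ : insert (t + 1) A₁ ∉ F₁ := fun hB => by
      simpa using (mem_partialPartitionsWithPath.1 hF₁).1.1 _ hB (mem_insert_self (t + 1) A₁)
    have hB := (insert_inj hB₁).1 h
    have hnotin : ∀ A ∈ powersetCard k (Icc 1 t \ F₁.biUnion id), t + 1 ∉ A := fun A hA h => by
      simpa using (mem_sdiff.1 ((mem_powersetCard.1 hA).1 h)).1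
    rw [← erase_insert (hnotin A₁ hA₁), hB, erase_insert (hnotin A₂ hA₂)]
  · obtain ⟨F, hF, A, hA, rfl⟩ := exists_insert_insert_eq_of_mem_partialPartitionsWithPath hlt hG
    exact ⟨⟨F, A⟩, mem_sigma.2 ⟨hF, hA⟩, rfl⟩

theorem card_partialPartitionsWithPath (hS0 : S 0 = 0)
    (hS : ∀ j < t, S j ≤ S (j + 1) ∧ S (j + 1) ≤ j + 1) :
    #(partialPartitionsWithPath S t) =
      ∏ j ∈ Icc 1 t with S (j - 1) < S j, (j - 1 - S (j - 1)).choose (j - S j) := by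
  induction t with
  | zero => simp [partialPartitionsWithPath_zero hS0]
  | succ t ih =>
    rw [prod_filter, prod_Icc_succ_top (by omega), ← prod_filter,
      ← ih fun j hj => hS j (by omega), Nat.add_sub_cancel]
    obtain ⟨hmono, hle⟩ := hS t t.lt_succ_self
    rcases hmono.lt_or_eq with hlt | heq
    · rw [if_pos hlt, card_partialPartitionsWithPath_succ_of_lt hlt,
        Nat.choose_symm_of_eq_add (b := t + 1 - S (t + 1)) (by omega)]
    · rw [if_neg heq.not_lt, partialPartitionsWithPath_succ_of_eq heq.symm, mul_one]

end partialPartitionsWithPath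

lemma IsSPath.succ_bounds {m : ℕ} {S : ℕ → ℕ} (hS : IsSPath m S) {j : ℕ} (hj : j < m) :
    S j ≤ S (j + 1) ∧ S (j + 1) ≤ j + 1 := by
  obtain ⟨hS0, hSm, hmid⟩ := hS
  constructor
  · rcases j.eq_zero_or_pos with rfl | hj0
    · exact hS0.symm ▸ Nat.zero_le _
    · exact (hmid j hj0 hj).trans (min_le_right _ _)
  · rcases (Nat.succ_le_of_lt hj).lt_or_eq with hjm | hjm
    · exact (hmid _ j.succ_pos hjm).trans (min_le_left _ _)
    · subst hjm
      exact hSm.le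

section partitions

variable {m : ℕ} {P : Finset (Finset ℕ)}

lemma isPartitionOf_iff : IsPartitionOf m P ↔ IsPartialPartition m P ∧ closedCard P m = m := by
  constructor
  · rintro ⟨hblock, hcover⟩
    have hP : IsPartialPartition m P :=
      ⟨fun C hC => (hblock C hC).2,
        fun C hC D hD hne => disjoint_left.2 fun x hxC hxD =>
          hne ((hcover x ((hblock C hC).2 hxC)).unique ⟨hC, hxC⟩ ⟨hD, hxD⟩),
        fun h => not_nonempty_empty (hblock ∅ h).1⟩
    have hU : P.biUnion id = Icc 1 m := by
      refine hP.biUnion_subset.antisymm fun x hx => ?_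
      obtain ⟨C, ⟨hC, hxC⟩, -⟩ := hcover x hx
      exact mem_biUnion.2 ⟨C, hC, hxC⟩
    refine ⟨hP, ?_⟩
    rw [← hP.card_biUnion, hU, Nat.card_Icc, Nat.add_sub_cancel]
  · rintro ⟨hP, hcard⟩
    have hU : P.biUnion id = Icc 1 m := eq_of_subset_of_card_le hP.biUnion_subset <| by
      rw [hP.card_biUnion, hcard, Nat.card_Icc, Nat.add_sub_cancel]
    refine ⟨fun C hC => ⟨nonempty_iff_ne_empty.2 fun h => hP.2.2 (h ▸ hC), hP.1 C hC⟩,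
      fun i hi => ?_⟩
    obtain ⟨C, hC, hiC⟩ := mem_biUnion.1 (hU ▸ hi)
    exact ⟨C, ⟨hC, hiC⟩, fun D ⟨hD, hiD⟩ => hP.2.1.elim_finset hD hC i hiD hiC⟩

/-- The `min` only makes the values fit in `Fin (m + 1)`: it is inactive on partial partitions
of `{1,…,m}`, see `pathFun_sPathTuple`. -/
def sPathTuple (m : ℕ) (P : Finset (Finset ℕ)) : Fin (m + 1) → Fin (m + 1) :=
  fun j => ⟨min (closedCard P j) m, Nat.lt_succ_of_le (min_le_right _ _)⟩

lemma pathFun_sPathTuple (hP : IsPartialPartition m P) {j : ℕ} (hj : j ≤ m) :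
    pathFun m (sPathTuple m P) j = closedCard P j := by
  rw [pathFun, dif_pos (Nat.lt_succ_of_le hj)]
  exact min_eq_left ((hP.closedCard_le j).trans hj)

lemma isSPath_pathFun_sPathTuple (hP : IsPartitionOf m P) :
    IsSPath m (pathFun m (sPathTuple m P)) := by
  obtain ⟨hP, hm⟩ := isPartitionOf_iff.1 hP
  refine ⟨?_, ?_, fun j _ hj => ?_⟩
  · rw [pathFun_sPathTuple hP (Nat.zero_le m)]
    exact Nat.le_zero.1 (hP.closedCard_le 0)
  · rw [pathFun_sPathTuple hP le_rfl, hm]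
  · rw [pathFun_sPathTuple hP hj.le, pathFun_sPathTuple hP hj]
    exact le_min (hP.closedCard_le j) (closedCard_mono P j.le_succ)

noncomputable def partitions (m : ℕ) : Finset (Finset (Finset ℕ)) :=
  {P ∈ (Icc 1 m).powerset.powerset | IsPartitionOf m P}

lemma coe_partitions : (partitions m : Set (Finset (Finset ℕ))) = {P | IsPartitionOf m P} := by
  ext P
  rw [partitions, coe_filter, Set.mem_ofPred_eq, Set.mem_ofPred_eq, and_iff_right_iff_imp]
  exact fun hP => mem_powerset.2 fun C hC => mem_powerset.2 (hP.1 C hC).2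

lemma filter_partitions_sPathTuple_eq {S : Fin (m + 1) → Fin (m + 1)} (hSm : pathFun m S m = m) :
    {P ∈ partitions m | sPathTuple m P = S} = partialPartitionsWithPath (pathFun m S) m := by
  ext P
  rw [mem_filter, partitions, mem_filter]
  constructor
  · rintro ⟨⟨-, hP⟩, rfl⟩
    have hP := (isPartitionOf_iff.1 hP).1
    exact mem_partialPartitionsWithPath.2 ⟨hP, fun j hj => (pathFun_sPathTuple hP hj).symm⟩
  · intro hmem
    obtain ⟨hP, hpath⟩ := mem_partialPartitionsWithPath.1 hmem
    refine ⟨⟨(mem_filter.1 hmem).1, isPartitionOf_iff.2 ⟨hP, by rw [hpath m le_rfl, hSm]⟩⟩,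
      funext fun j => Fin.ext ?_⟩
    have := (pathFun_sPathTuple hP j.is_le).trans (hpath j j.is_le)
    rwa [pathFun, pathFun, dif_pos j.is_lt, dif_pos j.is_lt] at this

lemma filter_partitions_sPathTuple_eq_empty {S : Fin (m + 1) → Fin (m + 1)}
    (hS : ¬IsSPath m (pathFun m S)) : {P ∈ partitions m | sPathTuple m P = S} = ∅ :=
  filter_eq_empty_iff.2 fun _ hP hPS =>
    hS (hPS ▸ isSPath_pathFun_sPathTuple (mem_filter.1 hP).2)

end partitions

/-- Summing the product formula `∏_{j : S_j > S_{j-1}} C(j-1-S_{j-1}, j-S_j)` over all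
S-paths of `m+1` coordinates gives the Bell number `B_m`, the number of set partitions
of `{1,…,m}`. -/
theorem sum_prod_choose_eq_bell (m : ℕ) :
    (∑ S : Fin (m + 1) → Fin (m + 1),
      if IsSPath m (pathFun m S) then
        ∏ j ∈ (Finset.Icc 1 m).filter (fun j => pathFun m S (j - 1) < pathFun m S j),
          Nat.choose (j - 1 - pathFun m S (j - 1)) (j - pathFun m S j)
      else 0) =
    {P : Finset (Finset ℕ) | IsPartitionOf m P}.ncard := by
  rw [← coe_partitions, Set.ncard_coe_finset,
    card_eq_sum_card_fiberwise fun P _ => mem_coe.2 (mem_univ (sPathTuple m P))]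
  refine sum_congr rfl fun S _ => ?_
  split_ifs with hS
  · rw [filter_partitions_sPathTuple_eq hS.2.1,
      card_partialPartitionsWithPath hS.1 fun _ => hS.succ_bounds]
  · rw [filter_partitions_sPathTuple_eq_empty hS, card_empty]
end
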